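/- Let a > 0, b ≥ 0, m ≥ 0 with m + b/a > 0, and r > 0. Then inf over s ∈ (0, 1/a) of G(s) := -bs/a - sm - (m/a + b/a²)log(1 - as) - sr is attained at s = r/(ar + am + b), and its value is at most -(1/a)[r + (m + b/a)·log((m + b/a)/(r + m + b/a))]. -/
import Mathlib


theorem bennett_optimization (a b m r : ℝ) (ha : 0 < a) (hb : 0 ≤ b) (hm : 0 ≤ m)
    (hmb : 0 < m + b / a) (hr : 0 < r) :
    letI G : ℝ → ℝ := fun s =>
      -b * s / a - s * m - (m / a + b / a ^ 2) * Real.log (1 - a * s) - s * r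
    r / (a * r + a * m + b) ∈ Set.Ioo 0 (1 / a) ∧
      (∀ s ∈ Set.Ioo 0 (1 / a), G (r / (a * r + a * m + b)) ≤ G s) ∧
      G (r / (a * r + a * m + b))
        ≤ -(1 / a) * (r + (m + b / a) * Real.log ((m + b / a) / (r + m + b / a))) := by
  set G : ℝ → ℝ := fun s =>
      -b * s / a - s * m - (m / a + b / a ^ 2) * Real.log (1 - a * s) - s * r with hGdef
  have ha' : a ≠ 0 := ne_of_gt ha
  set c : ℝ := m + b / a with hc_def
  have hc : 0 < c := hmb
  have hden : a * r + a * m + b = a * (r + c) := by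
    rw [hc_def]; field_simp; ring
  have hrc : 0 < r + c := by linarith
  have harc : 0 < a * (r + c) := mul_pos ha hrc
  set s0 : ℝ := r / (a * r + a * m + b) with hs0_def
  have hs0 : s0 = r / (a * (r + c)) := by rw [hs0_def, hden]
  have h1s0 : 1 - a * s0 = c / (r + c) := by
    rw [hs0]; field_simp; ring
  have h1s0pos : 0 < 1 - a * s0 := by rw [h1s0]; positivity
  have hmem : s0 ∈ Set.Ioo 0 (1 / a) := by
    constructor
    · rw [hs0]; positivity
    · rw [hs0, div_lt_div_iff₀ harc ha]
      nlinarith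
  have hG : ∀ s, G s = -(c + r) * s - (c / a) * Real.log (1 - a * s) := by
    intro s
    simp only [hGdef, hc_def]
    field_simp
    ring
  have hs0r : (c + r) * s0 = r / a := by
    rw [hs0]; field_simp; ring
  have hGs0 : G s0 = -(1 / a) * (r + c * Real.log (c / (r + c))) := by
    rw [hG, h1s0]
    have : -(c + r) * s0 = -(r / a) := by rw [← hs0r]; ring
    rw [this]; field_simp; ring
  refine ⟨hmem, ?_, ?_⟩
  · intro s hs
    have h1s : 0 < 1 - a * s := by
      have h2 : a * s < a * (1 / a) := (mul_lt_mul_iff_right₀ ha).mpr hs.2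
      have h3 : a * (1 / a) = 1 := by field_simp
      linarith
    rw [hG, hG]
    have hca : (0:ℝ) < c / a := by positivity
    have hlog : Real.log (1 - a * s) - Real.log (1 - a * s0)
        ≤ (1 - a * s) / (1 - a * s0) - 1 := by
      rw [← Real.log_div (ne_of_gt h1s) (ne_of_gt h1s0pos)]
      exact Real.log_le_sub_one_of_pos (by positivity)
    have h2 : c / a * (Real.log (1 - a * s) - Real.log (1 - a * s0))
        ≤ c / a * ((1 - a * s) / (1 - a * s0) - 1) :=
      mul_le_mul_of_nonneg_left hlog hca.le
    have h3 : c / a * ((1 - a * s) / (1 - a * s0) - 1) = r / a - s * (r + c) := by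
      rw [h1s0]
      field_simp
      ring
    rw [h3, mul_sub] at h2
    linarith
  · rw [hGs0]
    have h4 : r + m + b / a = r + c := by rw [hc_def]; ring
    rw [h4]
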